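/- arXiv:1610.00864 — 3 statements merged into one kernel-verified Lean document; each statement's English description precedes it below -/
import Mathlib

section
/- Let $n, p$ be positive integers and for an integer $s$ with $-(p-1) \le s \le p-1$ let $B_{2p,s} = \{(i_1,\ldots,i_{2p}) \in \{1,\ldots,n\}^{2p} : \sum_{k=1}^{2p}(-1)^k i_k = sn\}$. Then the cardinality of $B_{2p,s}$ equals $\sum_{k=0}^{p+s-1}(-1)^k\binom{2p}{k}\binom{(p+s-k)n+p-1}{2p-1}$. -/
/-!
Replacing `iₖ` by `n + 1 - iₖ` at the odd positions `k`, where `iₖ` enters the alternating sum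
with a minus sign, turns the condition into `∑ₖ iₖ = (p + s) n + p`, i.e. into compositions of
`T = (p + s) n - p` into `2p` parts `iₖ - 1 < n`. Inclusion–exclusion over the set of parts that
violate the bound, with stars and bars for each term, counts these as
`∑ (-1)ᵏ C(2p, k) C(T - kn + 2p - 1, 2p - 1)` over the `k` with `kn ≤ T`. This is the stated sum:
`T - kn + 2p - 1 = (p + s - k) n + p - 1`, the binomial of the formula vanishes when `kn > T`, and
no `k ≥ p + s` has `kn ≤ T`.
-/

open Finset

theorem card_filter_forall_not_eq_sum_powerset {α ι : Type*} [Fintype ι] [DecidableEq ι]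
    (A : Finset α) (P : ι → α → Prop) [∀ i, DecidablePred (P i)] :
    (#{a ∈ A | ∀ i, ¬ P i a} : ℤ) =
      ∑ S ∈ univ.powerset, (-1 : ℤ) ^ #S * #{a ∈ A | ∀ i ∈ S, P i a} := by
  classical
  have card_univ_filter (Q : α → Prop) [DecidablePred Q] :
      #{a : A | Q a} = #{a ∈ A | Q a} := by
    rw [univ_eq_attach, filter_attach, card_map, card_attach]
  have h := inclusion_exclusion_card_inf_compl (α := A) univ (fun i => {a : A | P i a})
  convert h using 4 <;> rw [← card_univ_filter] <;> congr 1 <;> ext a <;> simp [mem_inf]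

section

variable {ι : Type*} [Fintype ι] [DecidableEq ι]

theorem card_piAntidiag_univ (T : ℕ) :
    #(piAntidiag (univ : Finset ι) T) = (Fintype.card ι).multichoose T := by
  rw [← map_sym_eq_piAntidiag, card_map, sym_univ, card_univ, Sym.card_sym_eq_multichoose]

theorem card_filter_piAntidiag_add_forall_mem_le (S : Finset ι) (n T : ℕ) :
    #{f ∈ piAntidiag (univ : Finset ι) (T + #S * n) | ∀ i ∈ S, n ≤ f i} =
      #(piAntidiag (univ : Finset ι) T) := by
  set c : ι → ℕ := fun i => if i ∈ S then n else 0
  have sum_c : ∑ i, c i = #S * n := by simp [c, sum_ite_mem]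
  have c_le {f : ι → ℕ} (hf : ∀ i ∈ S, n ≤ f i) : c ≤ f := fun i => by
    by_cases hi : i ∈ S <;> simp [c, hi, hf]
  symm
  refine card_nbij' (· + c) (· - c) ?_ ?_ ?_ ?_
  · intro f hf
    simp_all [sum_add_distrib, c]
  · intro f hf
    rw [mem_coe, mem_filter, mem_piAntidiag] at hf
    rw [mem_coe, mem_piAntidiag]
    refine ⟨?_, by simp⟩
    change ∑ i, (f i - c i) = T
    rw [sum_tsub_distrib _ fun i _ => c_le hf.2 i, hf.1.1, sum_c, Nat.add_sub_cancel]
  · intro f _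
    exact add_tsub_cancel_right f c
  · intro f hf
    exact tsub_add_cancel_of_le (c_le (mem_filter.1 hf).2)

theorem card_filter_piAntidiag_forall_mem_le (S : Finset ι) (n T : ℕ) :
    #{f ∈ piAntidiag (univ : Finset ι) T | ∀ i ∈ S, n ≤ f i} =
      if #S * n ≤ T then (Fintype.card ι).multichoose (T - #S * n) else 0 := by
  split_ifs with h
  · obtain ⟨T, rfl⟩ := Nat.exists_eq_add_of_le' h
    rw [card_filter_piAntidiag_add_forall_mem_le, Nat.add_sub_cancel, card_piAntidiag_univ]
  · refine card_eq_zero.2 (filter_eq_empty_iff.2 fun f hf hle => h ?_)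
    rw [mem_piAntidiag] at hf
    calc #S * n = ∑ _ ∈ S, n := by simp
      _ ≤ ∑ i ∈ S, f i := sum_le_sum hle
      _ ≤ ∑ i, f i := sum_le_sum_of_subset (subset_univ S)
      _ = T := hf.1

theorem card_filter_piAntidiag_forall_lt (n T : ℕ) :
    (#{f ∈ piAntidiag (univ : Finset ι) T | ∀ i, f i < n} : ℤ) =
      ∑ k ∈ range (Fintype.card ι + 1), (-1 : ℤ) ^ k * (Fintype.card ι).choose k *
        (if k * n ≤ T then (Fintype.card ι).multichoose (T - k * n) else 0 : ℕ) := by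
  have h := card_filter_forall_not_eq_sum_powerset (piAntidiag univ T) (fun (i : ι) f => n ≤ f i)
  simp only [not_le, card_filter_piAntidiag_forall_mem_le] at h
  rw [h, sum_powerset_apply_card
    (fun k => (-1 : ℤ) ^ k * ↑(if k * n ≤ T then (Fintype.card ι).multichoose (T - k * n) else 0)),
    card_univ]
  refine sum_congr rfl fun k _ => ?_
  rw [nsmul_eq_mul]
  ring

theorem card_filter_sum_fin_eq_card_filter_piAntidiag (n T : ℕ) :
    #{t : ι → Fin n | ∑ i, (t i : ℕ) = T} = #{f ∈ piAntidiag (univ : Finset ι) T | ∀ i, f i < n} := by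
  refine card_bij (fun t _ i => t i) (fun t ht => ?_) (fun t _ t' _ h => ?_) fun f hf => ?_
  · simp_all
  · ext i
    exact congrFun h i
  · rw [mem_filter] at hf
    exact ⟨fun i => ⟨f i, hf.2 i⟩, by simpa using hf.1, rfl⟩

theorem card_filter_sum_fin_eq (n : ℕ) (T : ℤ) :
    (#{t : ι → Fin n | ∑ i, ((t i : ℕ) : ℤ) = T} : ℤ) =
      ∑ k ∈ range (Fintype.card ι + 1), (-1 : ℤ) ^ k * (Fintype.card ι).choose k *
        (if (k * n : ℤ) ≤ T then ((Fintype.card ι).multichoose (T - k * n).toNat : ℤ) else 0) := by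
  rcases lt_or_ge T 0 with hT | hT
  · have hle (k : ℕ) : ¬ (k * n : ℤ) ≤ T := by
      have : (0 : ℤ) ≤ k * n := by positivity
      omega
    have hsum (t : ι → Fin n) : ∑ i, ((t i : ℕ) : ℤ) ≠ T := by
      have : (0 : ℤ) ≤ ∑ i, ((t i : ℕ) : ℤ) := by positivity
      omega
    simp [hle, hsum]
  · lift T to ℕ using hT
    simp_rw [← Nat.cast_sum, Nat.cast_inj]
    rw [card_filter_sum_fin_eq_card_filter_piAntidiag, card_filter_piAntidiag_forall_lt]
    refine sum_congr rfl fun k _ => ?_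
    have hcast : (k * n : ℤ) ≤ T ↔ k * n ≤ T := by norm_cast
    rw [if_congr hcast rfl rfl]
    split_ifs with h
    · rw [← Nat.cast_mul, ← Nat.cast_sub h, Int.toNat_natCast]
    · simp

end

theorem sum_range_two_mul_ite_even {M : Type*} [AddCommMonoid M] (p : ℕ) (c : M) :
    ∑ k ∈ range (2 * p), (if Even k then c else 0) = p • c := by
  induction p with
  | zero => simp
  | succ p ih =>
    rw [mul_add, mul_one, sum_range_succ, sum_range_succ, ih, succ_nsmul]
    simp

-- `Fin` indices start at `0`: the even `k` are the positions `i₁, i₃, …` with a minus sign.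
def reflectEven {m n : ℕ} (t : Fin m → Fin n) : Fin m → Fin n :=
  fun k => if Even (k : ℕ) then (t k).rev else t k

theorem reflectEven_involutive (m n : ℕ) : Function.Involutive (@reflectEven m n) :=
  fun t => funext fun k => by by_cases h : Even (k : ℕ) <;> simp [reflectEven, h]

theorem reflectEven_apply_add_one {m n : ℕ} (t : Fin m → Fin n) (k : Fin m) :
    ((reflectEven t k : ℕ) : ℤ) + 1 =
      (-1 : ℤ) ^ ((k : ℕ) + 1) * ((t k : ℕ) + 1) + if Even (k : ℕ) then (n + 1 : ℤ) else 0 := by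
  by_cases h : Even (k : ℕ)
  · rw [reflectEven, if_pos h, if_pos h, pow_succ, h.neg_one_pow, Fin.val_rev,
      Nat.cast_sub (t k).is_lt]
    push_cast
    ring
  · simp [reflectEven, h, pow_succ, Nat.not_even_iff_odd.1 h]

theorem sum_reflectEven {n p : ℕ} (t : Fin (2 * p) → Fin n) :
    ∑ k, ((reflectEven t k : ℕ) : ℤ) =
      ∑ k : Fin (2 * p), (-1 : ℤ) ^ ((k : ℕ) + 1) * ((t k : ℕ) + 1) + p * n - p := by
  have h := sum_congr rfl fun k (_ : k ∈ univ) => reflectEven_apply_add_one t k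
  rw [sum_add_distrib, sum_add_distrib, sum_const, card_univ, Fintype.card_fin,
    Fin.sum_univ_eq_sum_range (fun k => if Even k then (n + 1 : ℤ) else 0),
    sum_range_two_mul_ite_even, nsmul_eq_mul, nsmul_eq_mul] at h
  push_cast at h
  linarith

theorem card_filter_alternating_sum_eq (n p : ℕ) (c : ℤ) :
    #{t : Fin (2 * p) → Fin n | ∑ k : Fin (2 * p), (-1 : ℤ) ^ ((k : ℕ) + 1) * ((t k : ℕ) + 1) = c} =
      #{t : Fin (2 * p) → Fin n | ∑ k, ((t k : ℕ) : ℤ) = c + p * n - p} :=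
  card_equiv (reflectEven_involutive _ _).toPerm fun t => by
    simp only [mem_filter, mem_univ, true_and, Function.Involutive.coe_toPerm, sum_reflectEven]
    omega

theorem choose_add_sub_one_two_mul_sub_one (a p : ℕ) (hp : 0 < p) :
    (a + p - 1).choose (2 * p - 1) = if p ≤ a then (2 * p).multichoose (a - p) else 0 := by
  split_ifs with h
  · rw [Nat.multichoose_eq, show 2 * p + (a - p) - 1 = a - p + (2 * p - 1) by omega,
      Nat.choose_symm_add, show a + p - 1 = a - p + (2 * p - 1) by omega]
  · exact Nat.choose_eq_zero_of_lt (by omega)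

theorem sum_range_eq_sum_range_of_eq_zero {M : Type*} [AddCommMonoid M] {f : ℕ → M} {a b : ℕ}
    (ha : ∀ k, a ≤ k → f k = 0) (hb : ∀ k, b ≤ k → f k = 0) :
    ∑ k ∈ range a, f k = ∑ k ∈ range b, f k := by
  wlog hab : a ≤ b generalizing a b
  · exact (this hb ha (by omega)).symm
  exact sum_subset (range_subset_range.2 hab) fun k _ hk => ha k (by simpa using hk)

theorem stmt_1_general (n p : ℕ) (s : ℤ) (hp : 0 < p) :
    ((Finset.univ.filter
        (fun t : Fin (2 * p) → Fin n =>
          ∑ k : Fin (2 * p), (-1 : ℤ) ^ ((k : ℕ) + 1) * ((t k : ℕ) + 1) = s * n)).card : ℤ) =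
      ∑ k ∈ Finset.range ((p : ℤ) + s).toNat,
        (-1 : ℤ) ^ k * ((2 * p).choose k) *
          (((((p : ℤ) + s).toNat - k) * n + p - 1).choose (2 * p - 1)) := by
  set q := ((p : ℤ) + s).toNat with hq
  rw [card_filter_alternating_sum_eq, card_filter_sum_fin_eq, Fintype.card_fin]
  refine (sum_range_eq_sum_range_of_eq_zero (b := q) (fun k hk => ?_) (fun k hk => ?_)).trans
    (sum_congr rfl fun k hk => ?_)
  · simp [Nat.choose_eq_zero_of_lt (show 2 * p < k by omega)]
  · have : (p + s) * n ≤ (k * n : ℤ) :=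
      mul_le_mul_of_nonneg_right ((Int.self_le_toNat _).trans (by omega)) (by positivity)
    simp only [if_neg (show ¬ (k * n : ℤ) ≤ s * n + p * n - p by linarith), mul_zero]
  · rw [mem_range] at hk
    have hqk : (((q - k) * n : ℕ) : ℤ) = s * n + p * n - k * n := by
      rw [Nat.cast_mul, Nat.cast_sub hk.le, hq, Int.toNat_of_nonneg (by omega)]
      ring
    rw [choose_add_sub_one_two_mul_sub_one _ _ hp, Nat.cast_ite, Nat.cast_zero]
    generalize (q - k) * n = a at hqk ⊢
    congr 1
    split_ifs
    · congr 2
      omega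
    all_goals omega

/-- Cardinality of the set of `2p`-tuples in `{1,…,n}` with alternating sum `s*n`. -/
theorem stmt_1 (n p : ℕ) (s : ℤ) (hn : 0 < n) (hp : 0 < p)
    (hs1 : -((p : ℤ) - 1) ≤ s) (hs2 : s ≤ (p : ℤ) - 1) :
    ((Finset.univ.filter
        (fun t : Fin (2 * p) → Fin n =>
          ∑ k : Fin (2 * p), (-1 : ℤ) ^ ((k : ℕ) + 1) * ((t k : ℕ) + 1) = s * n)).card : ℤ) =
      ∑ k ∈ Finset.range ((p : ℤ) + s).toNat,
        (-1 : ℤ) ^ k * ((2 * p).choose k) *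
          (((((p : ℤ) + s).toNat - k) * n + p - 1).choose (2 * p - 1)) :=
  stmt_1_general n p s hp
end

section
/- Let $X_1,\ldots,X_n$ be independent standard normal random variables, and let $\alpha_1,\ldots,\alpha_n$ and $\beta_1,\ldots,\beta_n$ be nonnegative integers. Then the covariance of the random variables $\prod_{i=1}^n X_i^{\alpha_i}$ and $\prod_{i=1}^n X_i^{\beta_i}$ is nonnegative, i.e., $E\big[\prod_i X_i^{\alpha_i+\beta_i}\big] \ge \prod_i E[X_i^{\alpha_i}] \cdot \prod_i E[X_i^{\beta_i}]$. -/
/-!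
The expectation of a product over independent coordinates factorises, so it suffices to show
`E[X^a] E[X^b] ≤ E[X^(a+b)]` for a single standard normal `X`. By symmetry of the Gaussian every
odd moment vanishes and every moment is nonnegative, which settles the case where `a` or `b` is
odd. When both are even, `x ^ a` and `x ^ b` are both increasing functions of `|x|`, and
Chebyshev's integral inequality for similarly ordered functions applies.
-/

open ProbabilityTheory MeasureTheory

section Chebyshev

variable {Ω : Type*} [MeasurableSpace Ω] {μ : Measure Ω} [IsProbabilityMeasure μ]

theorem Monovary.integral_mul_integral_le {f g : Ω → ℝ} (hfg : Monovary f g)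
    (hf : Integrable f μ) (hg : Integrable g μ) (hfg_int : Integrable (f * g) μ) :
    (∫ x, f x ∂μ) * (∫ x, g x ∂μ) ≤ ∫ x, (f * g) x ∂μ := by
  -- Integrate `(f x - f y) (g x - g y) ≥ 0` over two independent copies.
  have h_nonneg : 0 ≤ ∫ z, (f z.1 - f z.2) * (g z.1 - g z.2) ∂μ.prod μ :=
    integral_nonneg fun z => hfg.sub_mul_sub_nonneg z.2 z.1
  have h_diag₁ : Integrable (fun z : Ω × Ω => (f * g) z.1) (μ.prod μ) := hfg_int.comp_fst μ
  have h_diag₂ : Integrable (fun z : Ω × Ω => (f * g) z.2) (μ.prod μ) := hfg_int.comp_snd μ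
  have h_cross₁ : Integrable (fun z : Ω × Ω => f z.1 * g z.2) (μ.prod μ) := hf.mul_prod hg
  have h_cross₂ : Integrable (fun z : Ω × Ω => g z.1 * f z.2) (μ.prod μ) := hg.mul_prod hf
  have h_diag : Integrable (fun z : Ω × Ω => (f * g) z.1 + (f * g) z.2) (μ.prod μ) :=
    h_diag₁.add h_diag₂
  have h_diag_cross : Integrable
      (fun z : Ω × Ω => (f * g) z.1 + (f * g) z.2 - f z.1 * g z.2) (μ.prod μ) :=
    h_diag.sub h_cross₁
  have h_expand : (fun z : Ω × Ω => (f z.1 - f z.2) * (g z.1 - g z.2)) =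
      fun z => (f * g) z.1 + (f * g) z.2 - f z.1 * g z.2 - g z.1 * f z.2 := by
    ext z; simp only [Pi.mul_apply]; ring
  rw [h_expand, integral_sub h_diag_cross h_cross₂, integral_sub h_diag h_cross₁,
    integral_add h_diag₁ h_diag₂, integral_fun_fst, integral_fun_snd, integral_prod_mul,
    integral_prod_mul] at h_nonneg
  simp only [probReal_univ, one_smul] at h_nonneg
  linarith

end Chebyshev

section Symmetric

variable {μ : Measure ℝ} [μ.IsNegInvariant]

theorem integral_pow_eq_zero_of_odd {k : ℕ} (hk : Odd k) : ∫ x, x ^ k ∂μ = 0 := by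
  have h_neg : ∫ x, (-x) ^ k ∂μ = -∫ x, x ^ k ∂μ := by
    simp only [hk.neg_pow, integral_neg]
  rw [integral_neg_eq_self (fun x => x ^ k) μ] at h_neg
  linarith

theorem integral_pow_nonneg (k : ℕ) : 0 ≤ ∫ x, x ^ k ∂μ := by
  rcases Nat.even_or_odd k with hk | hk
  · exact integral_nonneg fun x => hk.pow_nonneg x
  · exact (integral_pow_eq_zero_of_odd hk).ge

theorem monovary_pow_of_even {a b : ℕ} (ha : Even a) (hb : Even b) :
    Monovary (fun x : ℝ => x ^ a) (fun x : ℝ => x ^ b) := by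
  intro x y hxy
  dsimp only at hxy ⊢
  rw [← hb.pow_abs x, ← hb.pow_abs y] at hxy
  rw [← ha.pow_abs x, ← ha.pow_abs y]
  exact pow_le_pow_left₀ (abs_nonneg x) (lt_of_pow_lt_pow_left₀ b (abs_nonneg y) hxy).le a

theorem integral_pow_mul_integral_pow_le [IsProbabilityMeasure μ]
    (h_int : ∀ k : ℕ, Integrable (fun x => x ^ k) μ) (a b : ℕ) :
    (∫ x, x ^ a ∂μ) * (∫ x, x ^ b ∂μ) ≤ ∫ x, x ^ (a + b) ∂μ := by
  rcases Nat.even_or_odd a with ha | ha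
  · rcases Nat.even_or_odd b with hb | hb
    · simp only [pow_add]
      exact (monovary_pow_of_even ha hb).integral_mul_integral_le (h_int a) (h_int b)
        ((h_int (a + b)).congr (ae_of_all _ fun x => pow_add x a b))
    · rw [integral_pow_eq_zero_of_odd hb, mul_zero]
      exact integral_pow_nonneg _
  · rw [integral_pow_eq_zero_of_odd ha, zero_mul]
    exact integral_pow_nonneg _

end Symmetric

instance isNegInvariant_gaussianReal (v : NNReal) : (gaussianReal 0 v).IsNegInvariant :=
  ⟨(Measure.neg_def _).trans (by simpa using gaussianReal_map_neg (μ := 0) (v := v))⟩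

theorem integrable_pow_gaussianReal (m : ℝ) (v : NNReal) (k : ℕ) :
    Integrable (fun x => x ^ k) (gaussianReal m v) :=
  (memLp_id_gaussianReal k).integrable_norm_pow'.mono' (by fun_prop)
    (ae_of_all _ fun x => by simp [norm_pow])

/-- Monomials in independent standard normals are positively correlated. -/
theorem stmt_3 (n : ℕ) (α β : Fin n → ℕ) :
    (∫ x, ∏ i, (x i) ^ (α i) ∂(Measure.pi fun _ : Fin n => gaussianReal 0 1)) *
      (∫ x, ∏ i, (x i) ^ (β i) ∂(Measure.pi fun _ : Fin n => gaussianReal 0 1)) ≤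
      ∫ x, ∏ i, (x i) ^ (α i + β i) ∂(Measure.pi fun _ : Fin n => gaussianReal 0 1) := by
  simp only [integral_fintype_prod_eq_prod (fun i (x : ℝ) => x ^ α i),
    integral_fintype_prod_eq_prod (fun i (x : ℝ) => x ^ β i),
    integral_fintype_prod_eq_prod (fun i (x : ℝ) => x ^ (α i + β i)), ← Finset.prod_mul_distrib]
  exact Finset.prod_le_prod
    (fun i _ => mul_nonneg (integral_pow_nonneg (α i)) (integral_pow_nonneg (β i)))
    (fun i _ => integral_pow_mul_integral_pow_le (integrable_pow_gaussianReal 0 1) (α i) (β i))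
end

section
/- Let $RC_n$ be the $n \times n$ reverse circulant matrix with real input $X_1,\ldots,X_n$. Then for every positive integer $p$, $\operatorname{Tr}(RC_n^{2p}) = n \sum_{(i_1,\ldots,i_{2p}) \in B_{2p}} X_{i_1}\cdots X_{i_{2p}}$, where $B_{2p} = \{(i_1,\ldots,i_{2p}) \in \{1,\ldots,n\}^{2p} : \sum_{k=1}^{2p}(-1)^k i_k \equiv 0 \pmod n\}$. -/
/-!
Writing `t k` for the index of the `k`-th entry of a product `M a₀ a₁ ⋯ M a_{m-1} a_m` of
entries of `M a b = X (a + b - 1)`, each step is the reflection `a_{k+1} = t k + 1 - a_k`,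
so the walk is determined by its start and by `t`, and ends at `(-1)^m (a₀ - ∑ₖ (-1)^k (t k + 1))`.
For even `m` this returns to `a₀` exactly when the alternating sum of the `t k` vanishes, a
condition independent of `a₀`; summing over the `n` starting points gives the trace.
-/

open Finset Matrix

lemma sum_neg_one_pow_of_even {R : Type*} [Ring R] {m : ℕ} (hm : Even m) :
    ∑ k : Fin m, (-1 : R) ^ (k : ℕ) = 0 := by
  rw [Fin.sum_univ_eq_sum_range (fun k => (-1 : R) ^ k), neg_one_geom_sum, if_pos hm]

variable {R S : Type*} [CommRing R] [CommSemiring S]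

def reverseCirculant (X : R → S) : Matrix R R S :=
  Matrix.of fun a b => X (a + b - 1)

def walkEnd {m : ℕ} (a : R) (t : Fin m → R) : R :=
  (-1) ^ m * (a - ∑ k : Fin m, (-1) ^ (k : ℕ) * (t k + 1))

lemma walkEnd_cons {m : ℕ} (a s : R) (t : Fin m → R) :
    walkEnd a (Fin.cons s t : Fin (m + 1) → R) = walkEnd (s + 1 - a) t := by
  have hshift : ∑ k : Fin m, (-1 : R) ^ ((k : ℕ) + 1) * (t k + 1) =
      -∑ k : Fin m, (-1 : R) ^ (k : ℕ) * (t k + 1) := by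
    rw [← sum_neg_distrib]
    exact sum_congr rfl fun k _ => by ring
  simp only [walkEnd, Fin.sum_univ_succ, Fin.cons_zero, Fin.cons_succ, Fin.val_zero,
    Fin.val_succ, hshift]
  ring

lemma walkEnd_eq_self_iff {m : ℕ} (hm : Even m) (a : R) (t : Fin m → R) :
    walkEnd a t = a ↔ ∑ k : Fin m, (-1 : R) ^ ((k : ℕ) + 1) * t k = 0 := by
  have halt : ∑ k : Fin m, (-1 : R) ^ ((k : ℕ) + 1) * t k =
      -∑ k : Fin m, (-1) ^ (k : ℕ) * (t k + 1) := by
    simp only [mul_add, mul_one, sum_add_distrib, sum_neg_one_pow_of_even hm, add_zero,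
      ← sum_neg_distrib, pow_succ]
    exact sum_congr rfl fun k _ => by ring
  rw [walkEnd, hm.neg_one_pow, one_mul, sub_eq_self, halt, neg_eq_zero]

variable [Fintype R] [DecidableEq R]

lemma reverseCirculant_pow_apply (X : R → S) (m : ℕ) (a b : R) :
    (reverseCirculant X ^ m) a b =
      ∑ t ∈ univ.filter (fun t : Fin m → R => walkEnd a t = b), ∏ k, X (t k) := by
  induction m generalizing a with
  | zero =>
    simp only [walkEnd, pow_zero, one_apply, univ_eq_empty, sum_empty, sub_zero, one_mul]
    split_ifs <;> simp [*]
  | succ m ih =>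
    rw [pow_succ', mul_apply, sum_filter, ← (Fin.consEquiv fun _ => R).sum_comp,
      Fintype.sum_prod_type, ← ((Equiv.addRight 1).trans (Equiv.subRight a)).sum_comp]
    refine sum_congr rfl fun s _ => ?_
    have hentry : reverseCirculant X a (s + 1 - a) = X s := by
      simp [reverseCirculant]
    simp only [Equiv.trans_apply, Equiv.coe_addRight, Equiv.subRight_apply, hentry, ih,
      Fin.consEquiv_apply, Fin.prod_univ_succ, Fin.cons_zero, Fin.cons_succ,
      sum_filter, mul_sum, mul_ite, mul_zero]
    exact sum_congr rfl fun t _ => by rw [← walkEnd_cons]; rfl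

lemma trace_reverseCirculant_pow_of_even (X : R → S) {m : ℕ} (hm : Even m) :
    trace (reverseCirculant X ^ m) = Fintype.card R •
      ∑ t ∈ univ.filter (fun t : Fin m → R => ∑ k : Fin m, (-1 : R) ^ ((k : ℕ) + 1) * t k = 0),
        ∏ k, X (t k) := by
  simp only [trace, diag_apply, reverseCirculant_pow_apply, walkEnd_eq_self_iff hm]
  rw [sum_const, card_univ]

theorem stmt_14_general (n : ℕ) [NeZero n] (X : ZMod n → ℝ) (p : ℕ) :
    Matrix.trace ((Matrix.of fun a b : ZMod n => X (a + b - 1)) ^ (2 * p)) =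
      n * ∑ t ∈ Finset.univ.filter
          (fun t : Fin (2 * p) → ZMod n =>
            ∑ k : Fin (2 * p), (-1 : ZMod n) ^ ((k : ℕ) + 1) * t k = 0),
        ∏ k, X (t k) := by
  have h := trace_reverseCirculant_pow_of_even X (even_two_mul p)
  rwa [ZMod.card, nsmul_eq_mul] at h

/-- Trace formula for even powers of the reverse circulant matrix. -/
theorem stmt_14 (n : ℕ) [NeZero n] (X : ZMod n → ℝ) (p : ℕ) (hp : 0 < p) :
    Matrix.trace ((Matrix.of fun a b : ZMod n => X (a + b - 1)) ^ (2 * p)) =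
      n * ∑ t ∈ Finset.univ.filter
          (fun t : Fin (2 * p) → ZMod n =>
            ∑ k : Fin (2 * p), (-1 : ZMod n) ^ ((k : ℕ) + 1) * t k = 0),
        ∏ k, X (t k) :=
  stmt_14_general n X p
end
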